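/- For any graph G, gon(G) ≥ min{|V(G)|, η(G)}, where η(G) is the edge-connectivity of G. -/

import Mathlib

/-- A finite loopless multigraph: a finite vertex type, a finite edge type,
and an assignment of an unordered pair of distinct endpoints to each edge. -/
structure Multigraph where
  V : Type
  E : Type
  [fintypeV : Fintype V]
  [fintypeE : Fintype E]
  [decEqV : DecidableEq V]
  ends : E → Sym2 V
  loopless : ∀ e, ¬ (ends e).IsDiag

attribute [instance] Multigraph.fintypeV Multigraph.fintypeE Multigraph.decEqV

namespace Multigraph

/-- The graph obtained by deleting the edges in `W` is connected (finite graphs are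
connected iff the vertex set is nonempty and every nonempty proper vertex subset
has an edge leaving it). -/
def ConnectedWithout (G : Multigraph) (W : Set G.E) : Prop :=
  Nonempty G.V ∧
    ∀ A : Finset G.V, A.Nonempty → A ≠ Finset.univ →
      ∃ e, e ∉ W ∧ ∃ u v, G.ends e = s(u, v) ∧ u ∈ A ∧ v ∉ A

/-- `G` is connected. -/
def Connected (G : Multigraph) : Prop := G.ConnectedWithout ∅

/-- `G` is `k`-edge-connected: deleting any set of at most `k - 1` edges
leaves a connected graph. -/
def EdgeConnected (G : Multigraph) (k : ℕ) : Prop :=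
  ∀ W : Finset G.E, W.card < k → G.ConnectedWithout ↑W

/-- An edge is a bridge if deleting it disconnects the graph. -/
def IsBridge (G : Multigraph) (e : G.E) : Prop := ¬ G.ConnectedWithout {e}

/-- The graph obtained by deleting the vertices in `U` (and all incident edges)
is connected. -/
def ConnectedAvoiding (G : Multigraph) (U : Set G.V) : Prop :=
  (∃ v, v ∉ U) ∧
    ∀ A : Finset G.V, A.Nonempty → (∀ a ∈ A, a ∉ U) → (∃ w, w ∉ U ∧ w ∉ A) →
      ∃ e u v, G.ends e = s(u, v) ∧ u ∈ A ∧ v ∉ A ∧ v ∉ U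

/-- `G` is `k`-vertex-connected: deleting any set of at most `k - 1` vertices
leaves a connected graph. -/
def VertexConnected (G : Multigraph) (k : ℕ) : Prop :=
  ∀ U : Finset G.V, U.card < k → G.ConnectedAvoiding ↑U

/-- `G` is simple: no two distinct edges have the same pair of endpoints. -/
def Simple (G : Multigraph) : Prop :=
  ∀ e e' : G.E, G.ends e = G.ends e' → e = e'

/-- The genus `g(G) = |E| - |V| + 1`. -/
def genus (G : Multigraph) : ℤ :=
  (Fintype.card G.E : ℤ) - (Fintype.card G.V : ℤ) + 1

/-- A tree is a connected graph of genus 0. -/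
def IsTree (G : Multigraph) : Prop := G.Connected ∧ G.genus = 0

/-- The number of edges joining `u` and `v`. -/
noncomputable def numEdges (G : Multigraph) (u v : G.V) : ℕ :=
  Set.ncard {e : G.E | G.ends e = s(u, v)}

/-- The valence of a vertex: the number of incident edges. -/
noncomputable def valence (G : Multigraph) (v : G.V) : ℕ :=
  Set.ncard {e : G.E | v ∈ G.ends e}

/-- A divisor on `G`: an element of the free abelian group on `V(G)`. -/
abbrev Divisor (G : Multigraph) : Type := G.V → ℤ

/-- The degree of a divisor: the sum of its coefficients. -/
def degree (G : Multigraph) (D : G.Divisor) : ℤ := ∑ v, D v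

/-- A divisor is effective if all its coefficients are nonnegative. -/
def Effective (G : Multigraph) (D : G.Divisor) : Prop := ∀ v, 0 ≤ D v

/-- The Laplacian of `G` applied to an integer vector `f`. -/
noncomputable def laplacian (G : Multigraph) (f : G.V → ℤ) : G.Divisor :=
  fun v => ∑ w, (G.numEdges v w : ℤ) * (f v - f w)

/-- Linear equivalence of divisors: the difference is in the image of the Laplacian. -/
def LinEquiv (G : Multigraph) (D D' : G.Divisor) : Prop :=
  ∃ f : G.V → ℤ, D - D' = G.laplacian f

/-- `D - F` is equivalent to an effective divisor for every effective `F` of degree `k`. -/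
def RankGe (G : Multigraph) (D : G.Divisor) (k : ℤ) : Prop :=
  ∀ F : G.Divisor, G.Effective F → G.degree F = k →
    ∃ E' : G.Divisor, G.Effective E' ∧ G.LinEquiv (D - F) E'

/-- The Baker–Norine rank of a divisor. -/
noncomputable def rank (G : Multigraph) (D : G.Divisor) : ℤ :=
  sSup {r : ℤ | r = -1 ∨ (0 ≤ r ∧ G.RankGe D r)}

/-- The (divisorial) gonality of `G`: the minimum degree of an effective divisor
of rank at least 1. -/
noncomputable def gonality (G : Multigraph) : ℕ :=
  sInf {n : ℕ | ∃ D : G.Divisor, G.Effective D ∧ G.degree D = (n : ℤ) ∧ 1 ≤ G.rank D}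

end Multigraph

/-- A morphism of multigraphs: vertices map to vertices, and each edge maps either
to an edge joining the images of its endpoints (if they are distinct) or to the
common image of its endpoints. -/
structure Morphism (G G' : Multigraph) where
  vertexMap : G.V → G'.V
  edgeMap : G.E → G'.E ⊕ G'.V
  map_edge_of_eq : ∀ e u v, G.ends e = s(u, v) → vertexMap u = vertexMap v →
    edgeMap e = Sum.inr (vertexMap u)
  map_edge_of_ne : ∀ e u v, G.ends e = s(u, v) → vertexMap u ≠ vertexMap v →
    ∃ e', edgeMap e = Sum.inl e' ∧ G'.ends e' = s(vertexMap u, vertexMap v)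

namespace Morphism

variable {G G' : Multigraph}

/-- The multiplicity `m_φ(v)` of `φ` at `v` with respect to an edge `e'` of `G'`. -/
noncomputable def mult (φ : Morphism G G') (v : G.V) (e' : G'.E) : ℕ :=
  Set.ncard {e : G.E | v ∈ G.ends e ∧ φ.edgeMap e = Sum.inl e'}

/-- `φ` is harmonic if `m_φ(v)` does not depend on the chosen edge `e'`
incident to `φ(v)`. -/
def Harmonic (φ : Morphism G G') : Prop :=
  ∀ (v : G.V) (e₁ e₂ : G'.E),
    φ.vertexMap v ∈ G'.ends e₁ → φ.vertexMap v ∈ G'.ends e₂ →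
      φ.mult v e₁ = φ.mult v e₂

/-- `φ` is non-degenerate if `m_φ(v) > 0` for every vertex `v`. -/
def Nondegenerate (φ : Morphism G G') : Prop :=
  ∀ (v : G.V) (e' : G'.E), φ.vertexMap v ∈ G'.ends e' → 0 < φ.mult v e'

/-- `φ` has degree `d`: every edge of `G'` has exactly `d` preimages. -/
def HasDegree (φ : Morphism G G') (d : ℕ) : Prop :=
  Nonempty G'.E ∧ ∀ e' : G'.E, Set.ncard {e : G.E | φ.edgeMap e = Sum.inl e'} = d

end Morphism

/-!
If `D` is effective of rank at least one and `deg D < |V|`, some vertex `q` carries no chip, yet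
`D - q` is equivalent to an effective divisor: `D - q - E' = Δf` with `E'` effective. Then `f` is
not constant, and on the set `A` where `f` is maximal the Laplacian is at least the number of
edges leaving `A`, which is at least `k` by `k`-edge-connectivity. Summing over `A`,
`deg D ≥ ∑_{v ∈ A} D v ≥ ∑_{v ∈ A} (Δf) v ≥ k`.
-/

open Finset

lemma Finset.exists_nonempty_ne_univ_forall_lt {α β : Type*} [Fintype α] [LinearOrder β]
    (f : α → β)
    (hf : ∃ a b, f a ≠ f b) :
    ∃ A : Finset α, A.Nonempty ∧ A ≠ univ ∧ ∀ u ∈ A, ∀ v ∉ A, f v < f u := by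
  obtain ⟨a, b, hab⟩ := hf
  obtain ⟨m, -, hm⟩ := univ.exists_max_image f ⟨a, mem_univ a⟩
  refine ⟨univ.filter (f · = f m), ⟨m, by simp⟩, fun h => hab ?_, ?_⟩
  · have hA : ∀ x, f x = f m := fun x => by simpa using Finset.ext_iff.mp h x
    rw [hA a, hA b]
  · intro u hu v hv
    simp only [mem_filter, mem_univ, true_and] at hu hv
    exact hu ▸ lt_of_le_of_ne (hm v (mem_univ v)) hv

namespace Multigraph

variable {G : Multigraph}

lemma numEdges_comm (G : Multigraph) (u v : G.V) : G.numEdges u v = G.numEdges v u := by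
  rw [numEdges, numEdges, Sym2.eq_swap]

lemma degree_sub (D D' : G.Divisor) : G.degree (D - D') = G.degree D - G.degree D' :=
  sum_sub_distrib _ _

lemma degree_single (q : G.V) (r : ℤ) : G.degree (Pi.single q r) = r :=
  Fintype.sum_pi_single' q r

lemma Effective.degree_nonneg {D : G.Divisor} (hD : G.Effective D) : 0 ≤ G.degree D :=
  sum_nonneg fun v _ => hD v

lemma effective_single (q : G.V) {r : ℤ} (hr : 0 ≤ r) : G.Effective (Pi.single q r) := by
  intro v
  by_cases hv : v = q
  · subst hv; simpa
  · simp [hv]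

lemma laplacian_const (c : ℤ) : G.laplacian (fun _ => c) = 0 := by
  funext v
  simp [laplacian]

/-- The edges inside `A` contribute nothing to `∑_{u ∈ A} (Δf) u`. -/
lemma sum_sum_numEdges_mul_sub_eq_zero (f : G.V → ℤ) (A : Finset G.V) :
    ∑ u ∈ A, ∑ v ∈ A, (G.numEdges u v : ℤ) * (f u - f v) = 0 := by
  have hanti : ∑ u ∈ A, ∑ v ∈ A, (G.numEdges u v : ℤ) * (f u - f v) =
      ∑ u ∈ A, ∑ v ∈ A, -((G.numEdges u v : ℤ) * (f u - f v)) := by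
    rw [sum_comm]
    refine sum_congr rfl fun u _ => sum_congr rfl fun v _ => ?_
    rw [numEdges_comm]
    ring
  simp only [sum_neg_distrib] at hanti
  linarith

lemma degree_laplacian (f : G.V → ℤ) : G.degree (G.laplacian f) = 0 :=
  sum_sum_numEdges_mul_sub_eq_zero f univ

lemma sum_laplacian_eq_sum_sum_compl (f : G.V → ℤ) (A : Finset G.V) :
    ∑ u ∈ A, G.laplacian f u = ∑ u ∈ A, ∑ v ∈ Aᶜ, (G.numEdges u v : ℤ) * (f u - f v) := by
  simp only [laplacian, ← sum_add_sum_compl A, sum_add_distrib,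
    sum_sum_numEdges_mul_sub_eq_zero, zero_add]

def cutEdges (G : Multigraph) (A : Finset G.V) : Finset G.E :=
  univ.filter fun e => ∃ u v, G.ends e = s(u, v) ∧ u ∈ A ∧ v ∉ A

lemma EdgeConnected.le_card_cutEdges {k : ℕ} (hk : G.EdgeConnected k) {A : Finset G.V}
    (hA : A.Nonempty) (hA' : A ≠ univ) : k ≤ (G.cutEdges A).card := by
  by_contra! hlt
  obtain ⟨e, he, u, v, huv, hu, hv⟩ := (hk _ hlt).2 A hA hA'
  exact he (by simpa [cutEdges] using ⟨u, v, huv, hu, hv⟩)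

lemma card_cutEdges_le (A : Finset G.V) :
    (G.cutEdges A).card ≤ ∑ u ∈ A, ∑ v ∈ Aᶜ, G.numEdges u v := by
  classical
  have hsub : G.cutEdges A ⊆
      A.biUnion fun u => Aᶜ.biUnion fun v => univ.filter fun e => G.ends e = s(u, v) := by
    intro e he
    obtain ⟨u, v, huv, hu, hv⟩ := by simpa [cutEdges] using he
    simpa using ⟨u, hu, v, hv, huv⟩
  refine (card_le_card hsub).trans (card_biUnion_le.trans (sum_le_sum fun u _ => ?_))
  refine card_biUnion_le.trans (le_of_eq (sum_congr rfl fun v _ => ?_))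
  rw [numEdges, Set.ncard_eq_toFinset_card', Set.toFinset_ofPred]

/-- Each edge leaving `A` contributes `f u - f v ≥ 1`. -/
lemma card_cutEdges_le_sum_laplacian {f : G.V → ℤ} {A : Finset G.V}
    (hf : ∀ u ∈ A, ∀ v ∉ A, f v < f u) :
    ((G.cutEdges A).card : ℤ) ≤ ∑ u ∈ A, G.laplacian f u := by
  rw [sum_laplacian_eq_sum_sum_compl]
  calc ((G.cutEdges A).card : ℤ) ≤ ∑ u ∈ A, ∑ v ∈ Aᶜ, (G.numEdges u v : ℤ) := by
        exact_mod_cast card_cutEdges_le A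
    _ ≤ _ := by
        refine sum_le_sum fun u hu => sum_le_sum fun v hv => ?_
        have : 1 ≤ f u - f v := by linarith [hf u hu v (mem_compl.mp hv)]
        nlinarith [(G.numEdges u v).cast_nonneg (α := ℤ)]

lemma RankGe.exists_sub_single_sub_eq_laplacian {D : G.Divisor} {r : ℤ} (h : G.RankGe D r)
    (hr : 0 ≤ r) (q : G.V) :
    ∃ E' f, G.Effective E' ∧ D - Pi.single q r - E' = G.laplacian f := by
  obtain ⟨E', hE', f, hf⟩ := h _ (effective_single q hr) (degree_single q r)
  exact ⟨E', f, hE', hf⟩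

lemma RankGe.le_degree [Nonempty G.V] {D : G.Divisor} {r : ℤ} (h : G.RankGe D r)
    (hr : 0 ≤ r) : r ≤ G.degree D := by
  obtain ⟨E', f, hE', hf⟩ := h.exists_sub_single_sub_eq_laplacian hr (Classical.arbitrary _)
  have hdeg := congrArg G.degree hf
  rw [degree_laplacian, degree_sub, degree_sub, degree_single] at hdeg
  linarith [hE'.degree_nonneg]

lemma one_le_rank_iff [Nonempty G.V] {D : G.Divisor} :
    1 ≤ G.rank D ↔ ∃ r, 1 ≤ r ∧ G.RankGe D r := by
  constructor
  · intro h
    obtain ⟨r, hr | ⟨-, hRG⟩, hlt⟩ :=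
      exists_lt_of_lt_csSup (s := {r : ℤ | r = -1 ∨ (0 ≤ r ∧ G.RankGe D r)}) ⟨-1, Or.inl rfl⟩
        (show (0 : ℤ) < G.rank D by omega)
    · omega
    · exact ⟨r, hlt, hRG⟩
  · rintro ⟨r, hr, hRG⟩
    have hbdd : BddAbove {r : ℤ | r = -1 ∨ (0 ≤ r ∧ G.RankGe D r)} := by
      refine ⟨max (-1) (G.degree D), fun s hs => ?_⟩
      rcases hs with rfl | ⟨hs, hRGs⟩
      · exact le_max_left _ _
      · exact (hRGs.le_degree hs).trans (le_max_right _ _)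
    exact hr.trans (le_csSup hbdd (Or.inr ⟨by omega, hRG⟩))

/-- Removing one chip from the all-ones divisor leaves an effective divisor. -/
lemma rankGe_one_const_one : G.RankGe (fun _ => 1) 1 := by
  intro F hF hFdeg
  refine ⟨(fun _ => 1) - F, fun v => ?_, 0, ?_⟩
  · have hle : F v ≤ 1 := hFdeg ▸ single_le_sum (fun w _ => hF w) (mem_univ v)
    simpa using hle
  · rw [sub_self]
    exact (laplacian_const 0).symm

lemma exists_divisor_degree_eq_gonality [Nonempty G.V] :
    ∃ D, G.Effective D ∧ G.degree D = G.gonality ∧ 1 ≤ G.rank D := by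
  have hcard : Fintype.card G.V ∈
      {n : ℕ | ∃ D : G.Divisor, G.Effective D ∧ G.degree D = n ∧ 1 ≤ G.rank D} :=
    ⟨fun _ => 1, fun _ => zero_le_one, by simp [degree],
      one_le_rank_iff.mpr ⟨1, le_rfl, rankGe_one_const_one⟩⟩
  exact Nat.sInf_mem ⟨_, hcard⟩

lemma exists_eq_zero_of_degree_lt_card {D : G.Divisor} (hD : G.Effective D)
    (hdeg : G.degree D < Fintype.card G.V) : ∃ q, D q = 0 := by
  by_contra! hne
  have hpos : ∀ q, 1 ≤ D q := fun q => lt_of_le_of_ne (hD q) (hne q).symm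
  have : (Fintype.card G.V : ℤ) ≤ G.degree D := by
    simpa [degree] using sum_le_sum fun q (_ : q ∈ univ) => hpos q
  omega

lemma EdgeConnected.le_degree {k : ℕ} (hk : G.EdgeConnected k) {D : G.Divisor}
    (hD : G.Effective D) {r : ℤ} (hr : 1 ≤ r) (hRG : G.RankGe D r)
    (hdeg : G.degree D < Fintype.card G.V) : (k : ℤ) ≤ G.degree D := by
  obtain ⟨q, hq⟩ := exists_eq_zero_of_degree_lt_card hD hdeg
  obtain ⟨E', f, hE', hf⟩ := hRG.exists_sub_single_sub_eq_laplacian (by omega) q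
  have hlap : ∀ v, G.laplacian f v = D v - (Pi.single q r : G.Divisor) v - E' v := fun v => by
    rw [← hf]
    rfl
  have hnonconst : ∃ a b, f a ≠ f b := by
    by_contra! hconst
    have hzero := hlap q
    rw [show f = fun _ => f q from funext fun v => hconst v q, laplacian_const] at hzero
    simp only [Pi.zero_apply, hq, Pi.single_eq_same] at hzero
    linarith [hE' q]
  obtain ⟨A, hA, hA', hlt⟩ := exists_nonempty_ne_univ_forall_lt f hnonconst
  calc (k : ℤ) ≤ (G.cutEdges A).card := by exact_mod_cast hk.le_card_cutEdges hA hA'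
    _ ≤ ∑ u ∈ A, G.laplacian f u := card_cutEdges_le_sum_laplacian hlt
    _ ≤ ∑ u ∈ A, D u := sum_le_sum fun u _ => by
        linarith [hlap u, hE' u, effective_single (G := G) q (show 0 ≤ r by omega) u]
    _ ≤ G.degree D := sum_le_sum_of_subset_of_nonneg (subset_univ A) fun v _ _ => hD v

end Multigraph

/-- For any graph `G`, `gon(G) ≥ min {|V(G)|, η(G)}`: for every `k`
such that `G` is `k`-edge-connected, `gon(G) ≥ min {|V(G)|, k}`. -/
theorem stmt_6 (G : Multigraph) (hG : G.Connected) :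
    ∀ k : ℕ, G.EdgeConnected k → min (Fintype.card G.V) k ≤ G.gonality := by
  intro k hk
  have : Nonempty G.V := hG.1
  obtain ⟨D, hD, hdeg, hrank⟩ := G.exists_divisor_degree_eq_gonality
  rcases le_or_gt (Fintype.card G.V) G.gonality with hcard | hcard
  · exact (min_le_left _ _).trans hcard
  · obtain ⟨r, hr, hRG⟩ := Multigraph.one_le_rank_iff.mp hrank
    have hk' := hk.le_degree hD hr hRG (by omega)
    exact (min_le_right _ _).trans (by omega)
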